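/- arXiv:2006.03584 — 3 statements merged into one kernel-verified Lean document; each statement's English description precedes it below -/
import Mathlib

section
/- For a path P_n with n ≥ 2, the rna number equals the adhika number (σ⁻(P_n) = σ⁺(P_n)) if and only if n = 3; and for a cycle C_n with n ≥ 3, σ⁻(C_n) = σ⁺(C_n) if and only if n = 4. -/
/-!
Every edge is either negative or positive, so `σ⁺(G) = |E(G)| - σ⁻(G)` and the condition reads
`2 σ⁻(G) = |E(G)|`. Under any labelling of a connected graph the vertices labelled `1` and `2` are
joined by a path, which must contain a negative edge; around a cycle the parity changes an even
number of times. Putting the odd labels on the first `⌈n/2⌉` vertices attains these bounds, so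
`σ⁻(P_n) = 1` and `σ⁻(C_n) = 2`, to be compared with `|E(P_n)| = n - 1` and `|E(C_n)| = n`.
-/

/-- A sign assignment on edges: `σ e` means edge `e` is positive. `(G, σ)` is a
*parity signed graph* if there is a bijective labelling `f : V → {1, …, n}`
(`n = |V|`) such that an edge is positive iff its endpoints' labels have the same parity. -/
def IsParitySigned {V : Type*} [Fintype V] (G : SimpleGraph V) (σ : Sym2 V → Prop) : Prop :=
  ∃ f : V → ℕ, Set.BijOn f Set.univ (Set.Icc 1 (Fintype.card V)) ∧
    ∀ u v : V, G.Adj u v → (σ s(u, v) ↔ f u % 2 = f v % 2)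

/-- The endpoints of `e` get labels of opposite parity under `f`. -/
def diffParity {V : Type*} (f : V → ℕ) : Sym2 V → Prop :=
  Sym2.lift ⟨fun u v => f u % 2 ≠ f v % 2, fun _ _ => propext ne_comm⟩

/-- Number of negative edges of `G` under the labelling `f`. -/
noncomputable def negCount {V : Type*} [Fintype V] (G : SimpleGraph V) (f : V → ℕ) : ℕ :=
  {e ∈ G.edgeSet | diffParity f e}.ncard

/-- Number of positive edges of `G` under the labelling `f`. -/
noncomputable def posCount {V : Type*} [Fintype V] (G : SimpleGraph V) (f : V → ℕ) : ℕ :=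
  {e ∈ G.edgeSet | ¬ diffParity f e}.ncard

/-- The *rna* number: the minimum number of negative edges over all bijective
labellings `f : V → {1, …, n}`. -/
noncomputable def rnaNumber {V : Type*} [Fintype V] (G : SimpleGraph V) : ℕ :=
  sInf {k | ∃ f : V → ℕ, Set.BijOn f Set.univ (Set.Icc 1 (Fintype.card V)) ∧ negCount G f = k}

/-- The *adhika* number: the maximum number of positive edges over all bijective
labellings `f : V → {1, …, n}`. -/
noncomputable def adhikaNumber {V : Type*} [Fintype V] (G : SimpleGraph V) : ℕ :=
  sSup {k | ∃ f : V → ℕ, Set.BijOn f Set.univ (Set.Icc 1 (Fintype.card V)) ∧ posCount G f = k}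

/-- The star `K_{1,q}`: center `0`, leaves the `q` nonzero vertices of `Fin (q+1)`. -/
def starGraph (q : ℕ) : SimpleGraph (Fin (q + 1)) :=
  SimpleGraph.fromRel (fun u _ => u = 0)

open SimpleGraph Function

section Labelling

variable {V : Type*} [Fintype V]

def IsLabelling (f : V → ℕ) : Prop :=
  Set.BijOn f Set.univ (Set.Icc 1 (Fintype.card V))

lemma exists_isLabelling : ∃ f : V → ℕ, IsLabelling f := by
  let φ := Fintype.equivFin V
  refine ⟨fun v => φ v + 1, fun v _ => ?_, fun u _ v _ h => ?_, fun k hk => ?_⟩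
  · have := (φ v).isLt
    simp only [Set.mem_Icc]
    omega
  · exact φ.injective (Fin.ext (by simpa using h))
  · obtain ⟨hk1, hk2⟩ := hk
    exact ⟨φ.symm ⟨k - 1, by omega⟩, trivial, by simp; omega⟩

omit [Fintype V] in
@[simp]
lemma diffParity_mk (f : V → ℕ) (u v : V) : diffParity f s(u, v) ↔ f u % 2 ≠ f v % 2 :=
  Iff.rfl

variable (G : SimpleGraph V)

lemma negCount_add_posCount (f : V → ℕ) :
    negCount G f + posCount G f = G.edgeSet.ncard :=
  Set.ncard_inter_add_ncard_sdiff_eq_ncard _ {e | diffParity f e}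

lemma rnaNumber_le {f : V → ℕ} (hf : IsLabelling f) : rnaNumber G ≤ negCount G f :=
  Nat.sInf_le ⟨f, hf, rfl⟩

lemma exists_negCount_eq_rnaNumber : ∃ f, IsLabelling f ∧ negCount G f = rnaNumber G := by
  obtain ⟨f, hf⟩ := exists_isLabelling (V := V)
  exact Nat.sInf_mem (s := {k | ∃ f, IsLabelling f ∧ negCount G f = k}) ⟨_, f, hf, rfl⟩

lemma bddAbove_posCount :
    BddAbove {k | ∃ f : V → ℕ, IsLabelling f ∧ posCount G f = k} := by
  refine ⟨G.edgeSet.ncard, ?_⟩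
  rintro _ ⟨f, -, rfl⟩
  exact Set.ncard_le_ncard fun e he => he.1

lemma posCount_le_adhikaNumber {f : V → ℕ} (hf : IsLabelling f) :
    posCount G f ≤ adhikaNumber G :=
  le_csSup (bddAbove_posCount G) ⟨f, hf, rfl⟩

lemma exists_posCount_eq_adhikaNumber :
    ∃ f, IsLabelling f ∧ posCount G f = adhikaNumber G := by
  obtain ⟨f, hf⟩ := exists_isLabelling (V := V)
  exact Nat.sSup_mem (s := {k | ∃ f, IsLabelling f ∧ posCount G f = k}) ⟨_, f, hf, rfl⟩
    (bddAbove_posCount G)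

lemma adhikaNumber_add_rnaNumber : adhikaNumber G + rnaNumber G = G.edgeSet.ncard := by
  obtain ⟨f₀, hf₀, hrna⟩ := exists_negCount_eq_rnaNumber G
  obtain ⟨f₁, hf₁, hadhika⟩ := exists_posCount_eq_adhikaNumber G
  have := posCount_le_adhikaNumber G hf₀
  have := rnaNumber_le G hf₁
  have := negCount_add_posCount G f₀
  have := negCount_add_posCount G f₁
  omega

variable {G}

lemma rnaNumber_eq_of_le {f : V → ℕ} {k : ℕ} (hf : IsLabelling f) (hfk : negCount G f ≤ k)
    (hk : ∀ g : V → ℕ, IsLabelling g → k ≤ negCount G g) : rnaNumber G = k := by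
  obtain ⟨g, hg, hrna⟩ := exists_negCount_eq_rnaNumber G
  exact le_antisymm ((rnaNumber_le G hf).trans hfk) (hrna ▸ hk g hg)

omit [Fintype V] in
lemma exists_mem_edges_diffParity (f : V → ℕ) {u v : V} (p : G.Walk u v)
    (huv : f u % 2 ≠ f v % 2) : ∃ e ∈ p.edges, diffParity f e := by
  induction p with
  | nil => exact absurd rfl huv
  | @cons u w v hadj p ih =>
    by_cases huw : f u % 2 = f w % 2
    · obtain ⟨e, he, hf⟩ := ih (huw ▸ huv)
      exact ⟨e, List.mem_cons_of_mem _ he, hf⟩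
    · exact ⟨s(u, w), List.mem_cons_self, huw⟩

lemma negCount_pos (hG : G.Preconnected) (hV : 2 ≤ Fintype.card V) {f : V → ℕ}
    (hf : IsLabelling f) : 0 < negCount G f := by
  obtain ⟨u, -, hu⟩ := hf.surjOn (show 1 ∈ Set.Icc 1 (Fintype.card V) by simp; omega)
  obtain ⟨v, -, hv⟩ := hf.surjOn (show 2 ∈ Set.Icc 1 (Fintype.card V) by simp; omega)
  obtain ⟨p⟩ := hG u v
  obtain ⟨e, he, hfe⟩ := exists_mem_edges_diffParity f p (by simp [hu, hv])
  exact (Set.ncard_pos).mpr ⟨e, p.edges_subset_edgeSet he, hfe⟩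

lemma negCount_eq_ncard_of_range {ι : Type*} {e : ι → Sym2 V} (he : Injective e)
    (hG : Set.range e = G.edgeSet) (f : V → ℕ) :
    negCount G f = {i | diffParity f (e i)}.ncard := by
  rw [negCount, ← hG, ← Set.ncard_image_of_injective _ he]
  congr 1
  ext x
  constructor
  · rintro ⟨⟨i, rfl⟩, hi⟩
    exact ⟨i, hi, rfl⟩
  · rintro ⟨i, hi, rfl⟩
    exact ⟨⟨i, rfl⟩, hi⟩

end Labelling

def oddsFirst (n : ℕ) (i : Fin n) : ℕ :=
  if i.val < (n + 1) / 2 then 2 * i.val + 1 else 2 * (i.val - (n + 1) / 2) + 2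

lemma isLabelling_oddsFirst (n : ℕ) : IsLabelling (oddsFirst n) := by
  rw [IsLabelling, Fintype.card_fin]
  refine ⟨fun i _ => ?_, fun i _ j _ h => ?_, fun k hk => ?_⟩
  · have := i.isLt
    simp only [oddsFirst, Set.mem_Icc]
    split <;> omega
  · have := i.isLt; have := j.isLt
    simp only [oddsFirst] at h
    ext
    split_ifs at h <;> omega
  · obtain ⟨hk1, hk2⟩ := hk
    refine ⟨⟨if k % 2 = 1 then (k - 1) / 2 else (n + 1) / 2 + (k - 2) / 2, ?_⟩, trivial, ?_⟩
    · split <;> omega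
    · simp only [oddsFirst]
      split_ifs <;> omega

lemma oddsFirst_mod_two (n : ℕ) (i : Fin n) :
    oddsFirst n i % 2 = if i.val < (n + 1) / 2 then 1 else 0 := by
  simp only [oddsFirst]
  split <;> omega

section Path

def pathEdge (n : ℕ) (i : Fin (n - 1)) : Sym2 (Fin n) :=
  s(⟨i, by omega⟩, ⟨i + 1, by omega⟩)

lemma pathEdge_injective (n : ℕ) : Injective (pathEdge n) := by
  intro i j h
  simp only [pathEdge, Sym2.eq_iff, Fin.ext_iff] at h
  ext
  omega

lemma range_pathEdge (n : ℕ) : Set.range (pathEdge n) = (pathGraph n).edgeSet := by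
  ext e
  induction e using Sym2.ind with
  | _ u v =>
    simp only [Set.mem_range, mem_edgeSet, pathGraph_adj, pathEdge, Sym2.eq_iff, Fin.ext_iff]
    constructor
    · rintro ⟨i, h⟩
      omega
    · have := u.isLt
      have := v.isLt
      rintro (h | h)
      · exact ⟨⟨u, by omega⟩, Or.inl ⟨rfl, h⟩⟩
      · exact ⟨⟨v, by omega⟩, Or.inr ⟨rfl, h⟩⟩

lemma ncard_edgeSet_pathGraph (n : ℕ) : (pathGraph n).edgeSet.ncard = n - 1 := by
  rw [← range_pathEdge, Set.ncard_range_of_injective (pathEdge_injective n), Nat.card_fin]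

lemma negCount_pathGraph_oddsFirst_le (n : ℕ) : negCount (pathGraph n) (oddsFirst n) ≤ 1 := by
  rw [negCount_eq_ncard_of_range (pathEdge_injective n) (range_pathEdge n)]
  refine (Set.ncard_le_one).mpr fun i hi j hj => Fin.ext ?_
  simp only [pathEdge, Set.mem_ofPred_eq, diffParity_mk, oddsFirst_mod_two] at hi hj
  split_ifs at hi hj <;> omega

lemma rnaNumber_pathGraph {n : ℕ} (hn : 2 ≤ n) : rnaNumber (pathGraph n) = 1 :=
  rnaNumber_eq_of_le (isLabelling_oddsFirst n) (negCount_pathGraph_oddsFirst_le n) fun _ hg =>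
    negCount_pos (pathGraph_preconnected n) (by simpa using hn) hg

end Path

section Cycle

variable {n : ℕ} [NeZero n]

def cycleEdge (i : Fin n) : Sym2 (Fin n) := s(i, i + 1)

lemma val_add_one_eq_ite (i : Fin n) :
    ((i + 1 : Fin n) : ℕ) = if (i : ℕ) + 1 = n then 0 else (i : ℕ) + 1 := by
  obtain ⟨m, rfl⟩ : ∃ m, n = m + 1 := Nat.exists_eq_succ_of_ne_zero (NeZero.ne n)
  simp [Fin.val_add_one, Fin.ext_iff]

lemma cycleEdge_injective (hn : 3 ≤ n) : Injective (cycleEdge (n := n)) := by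
  intro i j h
  rcases Sym2.eq_iff.mp h with ⟨hij, -⟩ | ⟨hij, hji⟩
  · exact hij
  · have hi := val_add_one_eq_ite i
    have hj := val_add_one_eq_ite j
    rw [Fin.ext_iff] at hij hji
    split_ifs at hi hj <;> omega

lemma range_cycleEdge (hn : 2 ≤ n) : Set.range (cycleEdge (n := n)) = (cycleGraph n).edgeSet := by
  obtain ⟨m, rfl⟩ : ∃ m, n = m + 2 := ⟨n - 2, by omega⟩
  ext e
  induction e using Sym2.ind with
  | _ u v =>
    simp only [Set.mem_range, mem_edgeSet, cycleGraph_adj, cycleEdge, Sym2.eq_iff,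
      sub_eq_iff_eq_add']
    constructor
    · rintro ⟨i, ⟨rfl, rfl⟩ | ⟨rfl, rfl⟩⟩
      exacts [Or.inr rfl, Or.inl rfl]
    · rintro (rfl | rfl)
      exacts [⟨v, Or.inr ⟨rfl, rfl⟩⟩, ⟨u, Or.inl ⟨rfl, rfl⟩⟩]

lemma ncard_edgeSet_cycleGraph (hn : 3 ≤ n) : (cycleGraph n).edgeSet.ncard = n := by
  rw [← range_cycleEdge (by omega), Set.ncard_range_of_injective (cycleEdge_injective hn),
    Nat.card_fin]

lemma even_negCount_cycleGraph (hn : 3 ≤ n) (f : Fin n → ℕ) :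
    Even (negCount (cycleGraph n) f) := by
  classical
  rw [negCount_eq_ncard_of_range (cycleEdge_injective hn) (range_cycleEdge (by omega)),
    Set.ncard_eq_toFinset_card', Set.toFinset_ofPred]
  have hodd : ∀ i, diffParity f (cycleEdge i) ↔ Odd (f i + f (i + 1)) := fun i => by
    rw [cycleEdge, diffParity_mk, Nat.odd_iff]
    omega
  simp only [hodd]
  -- `∑ i, (f i + f (i + 1)) = 2 * ∑ i, f i`, and its odd terms are the negative edges
  rw [← Finset.even_sum_iff_even_card_odd, Finset.sum_add_distrib,
    Fintype.sum_equiv (Equiv.addRight 1) (fun i => f (i + 1)) f fun _ => rfl]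
  exact ⟨_, rfl⟩

lemma negCount_cycleGraph_oddsFirst_le (hn : 3 ≤ n) :
    negCount (cycleGraph n) (oddsFirst n) ≤ 2 := by
  rw [negCount_eq_ncard_of_range (cycleEdge_injective hn) (range_cycleEdge (by omega))]
  -- the parity changes after the last odd label and on the closing edge `s(n - 1, 0)`
  calc {i | diffParity (oddsFirst n) (cycleEdge i)}.ncard
      ≤ ({⟨(n + 1) / 2 - 1, by omega⟩, ⟨n - 1, by omega⟩} : Set (Fin n)).ncard := by
        refine Set.ncard_le_ncard fun i hi => ?_
        have hsucc := val_add_one_eq_ite i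
        simp only [cycleEdge, Set.mem_ofPred_eq, diffParity_mk, oddsFirst_mod_two] at hi
        simp only [Set.mem_insert_iff, Set.mem_singleton_iff, Fin.ext_iff]
        split_ifs at hi hsucc <;> omega
    _ ≤ 2 := (Set.ncard_insert_le _ _).trans (by rw [Set.ncard_singleton])

lemma rnaNumber_cycleGraph (hn : 3 ≤ n) : rnaNumber (cycleGraph n) = 2 := by
  refine rnaNumber_eq_of_le (isLabelling_oddsFirst n) (negCount_cycleGraph_oddsFirst_le hn)
    fun g hg => ?_
  have hpos := negCount_pos cycleGraph_preconnected (by simp; omega) hg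
  obtain ⟨r, hr⟩ := even_negCount_cycleGraph hn g
  omega

end Cycle

/-- For `n ≥ 2`, `σ⁻(P_n) = σ⁺(P_n)` iff `n = 3`; and for `n ≥ 3`,
`σ⁻(C_n) = σ⁺(C_n)` iff `n = 4`. -/
theorem rna_eq_adhika_iff (n : ℕ) :
    (2 ≤ n →
      (rnaNumber (SimpleGraph.pathGraph n) = adhikaNumber (SimpleGraph.pathGraph n) ↔
        n = 3)) ∧
    (3 ≤ n →
      (rnaNumber (SimpleGraph.cycleGraph n) = adhikaNumber (SimpleGraph.cycleGraph n) ↔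
        n = 4)) := by
  refine ⟨fun hn => ?_, fun hn => ?_⟩
  · have hsum := adhikaNumber_add_rnaNumber (pathGraph n)
    rw [rnaNumber_pathGraph hn, ncard_edgeSet_pathGraph] at hsum
    rw [rnaNumber_pathGraph hn]
    omega
  · have : NeZero n := ⟨by omega⟩
    have hsum := adhikaNumber_add_rnaNumber (cycleGraph n)
    rw [rnaNumber_cycleGraph hn, ncard_edgeSet_cycleGraph hn] at hsum
    rw [rnaNumber_cycleGraph hn]
    omega
end

section
/- For every natural number k ≥ 1, there exists a finite connected simple graph G whose rna number σ⁻(G) equals k; in particular, the star K_{1,2k} satisfies σ⁻(K_{1,2k}) = k. -/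
/-!
Every edge of a star meets the centre, so an edge is negative exactly when its leaf's label has
parity opposite to the centre's. An odd centre label makes exactly the even labels in
`{1, …, q + 1}` negative, `(q + 1) / 2` of them, while an even one makes all `(q + 2) / 2` odd
labels negative. Hence `σ⁻(K_{1,q}) = (q + 1) / 2`, which is `k` for `q = 2k`.
-/

open Finset in
theorem card_filter_Icc_one_mod_two (n r : ℕ) (hr : r < 2) :
    #{m ∈ Icc 1 n | m % 2 = r} = (n + r) / 2 := by
  induction n with
  | zero => simp; omega
  | succ n ih =>
    rw [← Order.succ_eq_add_one, ← insert_Icc_right_eq_Icc_succ (by simp), filter_insert,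
      Order.succ_eq_add_one]
    split_ifs
    · rw [card_insert_of_notMem (by simp), ih]; omega
    · rw [ih]; omega

theorem Fin.bijOn_val_add_one (n : ℕ) :
    Set.BijOn (fun v : Fin n => v.val + 1) Set.univ (Set.Icc 1 n) := by
  refine ⟨fun v _ => ?_, fun u _ v _ h => Fin.ext (by simpa using h), fun m hm => ?_⟩
  · simp only [Set.mem_Icc]; omega
  · exact ⟨⟨m - 1, by grind⟩, Set.mem_univ _, by grind⟩

theorem Set.BijOn.ncard_setOf_comp {α β : Type*} {f : α → β} {t : Set β}
    (hf : Set.BijOn f Set.univ t) (p : β → Prop) :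
    {a | p (f a)}.ncard = {b ∈ t | p b}.ncard := by
  rw [← (hf.injOn.mono (Set.subset_univ _)).ncard_image]
  change (f '' (f ⁻¹' {b | p b})).ncard = _
  rw [Set.image_preimage_eq_inter_range, ← Set.image_univ, hf.image_eq, Set.inter_comm]
  rfl

theorem rnaNumber_eq_of_forall_le {V : Type*} [Fintype V] {G : SimpleGraph V} {k : ℕ}
    (hex : ∃ f : V → ℕ, Set.BijOn f Set.univ (Set.Icc 1 (Fintype.card V)) ∧ negCount G f = k)
    (hle : ∀ f : V → ℕ, Set.BijOn f Set.univ (Set.Icc 1 (Fintype.card V)) → k ≤ negCount G f) :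
    rnaNumber G = k :=
  le_antisymm (Nat.sInf_le hex) (le_csInf ⟨k, hex⟩ fun _ ⟨f, hf, hfk⟩ => hfk ▸ hle f hf)

theorem starGraph_adj {q : ℕ} {u v : Fin (q + 1)} :
    (starGraph q).Adj u v ↔ u ≠ v ∧ (u = 0 ∨ v = 0) := by
  simp [starGraph, SimpleGraph.fromRel_adj]

theorem starGraph_connected (q : ℕ) : (starGraph q).Connected :=
  (SimpleGraph.connected_iff_exists_forall_reachable _).2 ⟨0, fun v => by
    obtain rfl | hv := eq_or_ne v 0
    · rfl
    · exact (starGraph_adj.2 ⟨hv.symm, Or.inl rfl⟩).reachable⟩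

theorem negCount_starGraph (q : ℕ) (f : Fin (q + 1) → ℕ) :
    negCount (starGraph q) f = {v | f v % 2 ≠ f 0 % 2}.ncard := by
  have hinj : Function.Injective (fun v : Fin (q + 1) => s(0, v)) :=
    fun _ _ h => Sym2.congr_right.1 h
  rw [negCount, ← Set.ncard_image_of_injective _ hinj]
  congr 1
  ext e
  induction e using Sym2.ind with
  | _ u v =>
    simp only [Set.mem_ofPred_eq, Set.mem_image, SimpleGraph.mem_edgeSet, starGraph_adj,
      diffParity, Sym2.lift_mk]
    grind

theorem negCount_starGraph_of_bijOn (q : ℕ) {f : Fin (q + 1) → ℕ}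
    (hf : Set.BijOn f Set.univ (Set.Icc 1 (q + 1))) :
    negCount (starGraph q) f = (q + 2 - f 0 % 2) / 2 := by
  have hlabels : {m ∈ Set.Icc 1 (q + 1) | m % 2 ≠ f 0 % 2}
      = ↑{m ∈ Finset.Icc 1 (q + 1) | m % 2 = 1 - f 0 % 2} := by
    ext m
    simp only [Finset.coe_filter, Finset.mem_Icc, Set.mem_Icc, Set.mem_ofPred_eq]
    omega
  rw [negCount_starGraph, hf.ncard_setOf_comp (· % 2 ≠ f 0 % 2), hlabels, Set.ncard_coe_finset,
    card_filter_Icc_one_mod_two _ _ (by omega)]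
  omega

theorem rnaNumber_starGraph (q : ℕ) : rnaNumber (starGraph q) = (q + 1) / 2 := by
  have hcard : Fintype.card (Fin (q + 1)) = q + 1 := Fintype.card_fin _
  refine rnaNumber_eq_of_forall_le
    ⟨_, by rw [hcard]; exact Fin.bijOn_val_add_one _, ?_⟩ fun f hf => ?_
  · simp [negCount_starGraph_of_bijOn q (Fin.bijOn_val_add_one _)]
  · rw [hcard] at hf
    rw [negCount_starGraph_of_bijOn q hf]
    omega

theorem exists_graph_with_rna_general (k : ℕ) :
    (∃ (V : Type) (_ : Fintype V) (G : SimpleGraph V), G.Connected ∧ rnaNumber G = k) ∧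
      rnaNumber (starGraph (2 * k)) = k := by
  have hstar : rnaNumber (starGraph (2 * k)) = k := by
    rw [rnaNumber_starGraph]
    omega
  exact ⟨⟨_, inferInstance, _, starGraph_connected (2 * k), hstar⟩, hstar⟩

/-- For every `k ≥ 1` there is a finite connected graph with rna
number `k`; in particular the star `K_{1,2k}` has rna number `k`. -/
theorem exists_graph_with_rna (k : ℕ) (hk : 1 ≤ k) :
    (∃ (V : Type) (_ : Fintype V) (G : SimpleGraph V), G.Connected ∧ rnaNumber G = k) ∧
      rnaNumber (starGraph (2 * k)) = k :=
  exists_graph_with_rna_general k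
end

section
/- Let G be a finite connected simple graph on n ≥ 2 vertices. Then the rna number σ⁻(G) equals 1 if and only if G has a cut-edge (bridge) uv such that the two connected components of G − uv have orders differing by at most 1. -/
/-!
Labels of one parity form a set of `⌊n/2⌋` or `⌈n/2⌉` vertices, and any such set is the
parity class of some labelling. A labelling with a single negative edge `uv` makes `uv` the
only edge between its two parity classes; in a connected graph these classes are then exactly
the two components of `G - uv`, so `uv` is a bridge with balanced sides. Conversely, labelling
the two sides of such a bridge by the two parities leaves `uv` as the only negative edge, and no
labelling does better, since a walk from the vertex labelled `1` to the one labelled `2` must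
change parity along some edge.
-/

open Set SimpleGraph

namespace SimpleGraph

variable {V : Type*} {G : SimpleGraph V}

theorem Reachable.mem_iff_mem {S : Set V} (hS : ∀ x y, G.Adj x y → (x ∈ S ↔ y ∈ S))
    {a b : V} (h : G.Reachable a b) : a ∈ S ↔ b ∈ S := by
  obtain ⟨p⟩ := h
  induction p with
  | nil => rfl
  | cons hac _ ih => exact (hS _ _ hac).trans ih

theorem Walk.reachable_deleteEdges_or (u v : V) {a b : V} (p : G.Walk a b)
    (hb : (G.deleteEdges {s(u, v)}).Reachable b u ∨ (G.deleteEdges {s(u, v)}).Reachable b v) :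
    (G.deleteEdges {s(u, v)}).Reachable a u ∨ (G.deleteEdges {s(u, v)}).Reachable a v := by
  induction p with
  | nil => exact hb
  | @cons a c _ hac _ ih =>
    by_cases he : s(a, c) = s(u, v)
    · rcases Sym2.eq_iff.mp he with ⟨rfl, -⟩ | ⟨rfl, -⟩
      · exact .inl .rfl
      · exact .inr .rfl
    · have hac' : (G.deleteEdges {s(u, v)}).Adj a c := deleteEdges_adj.mpr ⟨hac, he⟩
      exact (ih hb).imp hac'.reachable.trans hac'.reachable.trans

theorem Connected.reachable_deleteEdges_or (hG : G.Connected) (u v w : V) :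
    (G.deleteEdges {s(u, v)}).Reachable w u ∨ (G.deleteEdges {s(u, v)}).Reachable w v :=
  (hG.preconnected w u).some.reachable_deleteEdges_or u v (.inl .rfl)

theorem Connected.supp_connectedComponentMk_deleteEdges_eq_compl (hG : G.Connected) {u v : V}
    (h : ¬(G.deleteEdges {s(u, v)}).Reachable u v) :
    ((G.deleteEdges {s(u, v)}).connectedComponentMk v).supp =
      ((G.deleteEdges {s(u, v)}).connectedComponentMk u).suppᶜ := by
  ext w
  simp only [mem_compl_iff, ConnectedComponent.mem_supp_iff, ConnectedComponent.eq]
  exact ⟨fun hv hu => h (hu.symm.trans hv), (hG.reachable_deleteEdges_or u v w).resolve_left⟩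

theorem Connected.supp_connectedComponentMk_deleteEdges_eq (hG : G.Connected) {u v : V}
    {S : Set V} (hu : u ∈ S) (hv : v ∉ S)
    (hcut : ∀ x y, G.Adj x y → ¬(x ∈ S ↔ y ∈ S) → s(x, y) = s(u, v)) :
    ((G.deleteEdges {s(u, v)}).connectedComponentMk u).supp = S := by
  have hclosed : ∀ x y, (G.deleteEdges {s(u, v)}).Adj x y → (x ∈ S ↔ y ∈ S) := by
    intro x y hxy
    rw [deleteEdges_adj, mem_singleton_iff] at hxy
    exact not_not.mp (mt (hcut x y hxy.1) hxy.2)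
  ext w
  rw [ConnectedComponent.mem_supp_iff, ConnectedComponent.eq]
  refine ⟨fun hwu => ((hwu.mem_iff_mem hclosed).mpr hu), fun hw => ?_⟩
  exact (hG.reachable_deleteEdges_or u v w).resolve_right
    fun hwv => hv ((hwv.mem_iff_mem hclosed).mp hw)

theorem ConnectedComponent.mem_supp_deleteEdges_iff {e : Sym2 V}
    (C : (G.deleteEdges {e}).ConnectedComponent) {x y : V} (hxy : G.Adj x y) (he : s(x, y) ≠ e) :
    x ∈ C.supp ↔ y ∈ C.supp := by
  have hxy' : (G.deleteEdges {e}).Adj x y := deleteEdges_adj.mpr ⟨hxy, he⟩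
  simp only [ConnectedComponent.mem_supp_iff,
    ConnectedComponent.connectedComponentMk_eq_of_adj hxy']

end SimpleGraph

theorem Set.exists_bijOn_univ_preimage_eq {α β : Type*} [Finite α] [Nonempty β] {A : Set α}
    {T t : Set β} (hTt : T ⊆ t) (ht : t.Finite) (hA : A.ncard = T.ncard)
    (hcard : t.ncard = Nat.card α) :
    ∃ f : α → β, BijOn f univ t ∧ f ⁻¹' T = A := by
  classical
  have hT : T.Finite := ht.subset hTt
  have hAc : Aᶜ.ncard = (t \ T).ncard := by
    have := ncard_add_ncard_compl A
    have := ncard_sdiff_add_ncard_of_subset hTt ht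
    omega
  obtain ⟨g, hg⟩ := (toFinite A).exists_bijOn_of_encard_eq (t := T) <| by
    rw [← (toFinite A).cast_ncard_eq, ← hT.cast_ncard_eq, hA]
  obtain ⟨h, hh⟩ := (toFinite Aᶜ).exists_bijOn_of_encard_eq (t := t \ T) <| by
    rw [← (toFinite Aᶜ).cast_ncard_eq, ← ht.sdiff.cast_ncard_eq, hAc]
  have hgA : BijOn (A.piecewise g h) A T := hg.congr (piecewise_eqOn A g h).symm
  have hhA : BijOn (A.piecewise g h) Aᶜ (t \ T) := hh.congr (piecewise_eqOn_compl A g h).symm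
  refine ⟨A.piecewise g h, ?_, Subset.antisymm (fun x hx => ?_) hgA.mapsTo⟩
  · have hinj : InjOn (A.piecewise g h) (A ∪ Aᶜ) :=
      (injOn_union disjoint_compl_right).mpr ⟨hgA.injOn, hhA.injOn,
        fun x hx y hy hxy => (hhA.mapsTo hy).2 (hxy ▸ hgA.mapsTo hx)⟩
    simpa only [union_compl_self, union_sdiff_cancel hTt] using hgA.union hhA hinj
  · by_contra hxA
    exact (hhA.mapsTo hxA).2 hx

theorem Set.ncard_setOf_mem_Icc_mod_two_eq_zero (n : ℕ) :
    {m ∈ Icc 1 n | m % 2 = 0}.ncard = n / 2 := by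
  rw [← Nat.Ioc_filter_dvd_card_eq_div n 2, ← ncard_coe_finset]
  congr 1
  ext m
  simp only [mem_Icc, mem_ofPred_eq, Finset.coe_filter, Finset.mem_Ioc]
  omega

section Labelling

variable {V : Type*} [Fintype V]

theorem abs_ncard_sub_ncard_compl_le_one_iff (A : Set V) :
    |(A.ncard : ℤ) - Aᶜ.ncard| ≤ 1 ↔
      A.ncard = Fintype.card V / 2 ∨ Aᶜ.ncard = Fintype.card V / 2 := by
  have := ncard_add_ncard_compl A
  rw [Nat.card_eq_fintype_card] at this
  rw [abs_sub_le_iff]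
  omega

theorem ncard_setOf_mod_two_eq_zero {f : V → ℕ} (hf : BijOn f univ (Icc 1 (Fintype.card V))) :
    {w | f w % 2 = 0}.ncard = Fintype.card V / 2 := by
  rw [← ncard_setOf_mem_Icc_mod_two_eq_zero, ← ncard_preimage_of_injective_subset_range
    (injOn_univ.mp hf.injOn) ((sep_subset _ _).trans hf.surjOn.subset_range)]
  congr 1
  ext w
  simp only [mem_ofPred_eq, mem_preimage, and_iff_right (hf.mapsTo (mem_univ w))]

theorem abs_ncard_setOf_mod_two_sub_le_one {f : V → ℕ}
    (hf : BijOn f univ (Icc 1 (Fintype.card V))) (u : V) :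
    |({w | f w % 2 = f u % 2}.ncard : ℤ) - {w | f w % 2 = f u % 2}ᶜ.ncard| ≤ 1 := by
  rw [abs_ncard_sub_ncard_compl_le_one_iff, ← ncard_setOf_mod_two_eq_zero hf]
  rcases Nat.mod_two_eq_zero_or_one (f u) with h | h
  · simp only [h, true_or]
  · right
    congr 1
    ext w
    simp only [h, mem_compl_iff, mem_ofPred_eq]
    omega

theorem exists_bijOn_mod_two_eq_iff {A : Set V} (hA : |(A.ncard : ℤ) - Aᶜ.ncard| ≤ 1) :
    ∃ f : V → ℕ, BijOn f univ (Icc 1 (Fintype.card V)) ∧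
      ∀ x y, f x % 2 = f y % 2 ↔ (x ∈ A ↔ y ∈ A) := by
  have hEven (B : Set V) (hB : B.ncard = Fintype.card V / 2) :
      ∃ f : V → ℕ, BijOn f univ (Icc 1 (Fintype.card V)) ∧
        ∀ x, f x % 2 = 0 ↔ x ∈ B := by
    obtain ⟨f, hf, hfB⟩ := exists_bijOn_univ_preimage_eq (sep_subset _ _) (toFinite _)
      (hB.trans (ncard_setOf_mem_Icc_mod_two_eq_zero _).symm) (by simp)
    exact ⟨f, hf, fun x =>
      (and_iff_right (hf.mapsTo (mem_univ x))).symm.trans (Set.ext_iff.mp hfB x)⟩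
  rcases (abs_ncard_sub_ncard_compl_le_one_iff A).mp hA with h | h
  · obtain ⟨f, hf, hfA⟩ := hEven A h
    exact ⟨f, hf, fun x y => by rw [← hfA, ← hfA]; omega⟩
  · obtain ⟨f, hf, hfA⟩ := hEven Aᶜ h
    have hodd (x : V) : f x % 2 = 1 ↔ x ∈ A := by rw [← notMem_compl_iff, ← hfA]; omega
    exact ⟨f, hf, fun x y => by rw [← hodd, ← hodd]; omega⟩

variable {G : SimpleGraph V} {f : V → ℕ}

theorem negCount_eq_one_iff :
    negCount G f = 1 ↔ ∃ u v, G.Adj u v ∧ f u % 2 ≠ f v % 2 ∧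
      ∀ x y, G.Adj x y → f x % 2 ≠ f y % 2 → s(x, y) = s(u, v) := by
  rw [negCount, ncard_eq_one]
  constructor
  · rintro ⟨e, he⟩
    induction e using Sym2.ind with
    | _ u v =>
      obtain ⟨huv, hfuv⟩ : s(u, v) ∈ {e ∈ G.edgeSet | diffParity f e} := he ▸ rfl
      exact ⟨u, v, huv, hfuv,
        fun x y hxy hfxy => he.subset (show s(x, y) ∈ _ from ⟨hxy, hfxy⟩)⟩
  · rintro ⟨u, v, huv, hfuv, honly⟩
    refine ⟨s(u, v), Subset.antisymm ?_ (singleton_subset_iff.mpr ⟨huv, hfuv⟩)⟩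
    rintro e ⟨he, hfe⟩
    induction e using Sym2.ind with
    | _ x y => exact honly x y he hfe

theorem one_le_negCount (hG : G.Connected) (hn : 2 ≤ Fintype.card V)
    (hf : BijOn f univ (Icc 1 (Fintype.card V))) : 1 ≤ negCount G f := by
  obtain ⟨a, -, ha⟩ := hf.surjOn (show 1 ∈ Icc 1 (Fintype.card V) from ⟨le_rfl, by omega⟩)
  obtain ⟨b, -, hb⟩ := hf.surjOn (show 2 ∈ Icc 1 (Fintype.card V) from ⟨by omega, hn⟩)
  obtain ⟨d, -, hd, hd'⟩ := (hG.preconnected a b).some.exists_boundary_dart {w | f w % 2 = 1}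
    (by simp [ha]) (by simp [hb])
  rw [negCount, Nat.one_le_iff_ne_zero, ← Nat.pos_iff_ne_zero, ncard_pos]
  exact ⟨d.edge, d.edge_mem, show f d.fst % 2 ≠ f d.snd % 2 by
    simp only [mem_ofPred_eq] at hd hd'; omega⟩

theorem rnaNumber_eq_one_iff (hG : G.Connected) (hn : 2 ≤ Fintype.card V) :
    rnaNumber G = 1 ↔
      ∃ f : V → ℕ, BijOn f univ (Icc 1 (Fintype.card V)) ∧ negCount G f = 1 := by
  constructor
  · intro h
    obtain ⟨f, hf, hf1⟩ := Nat.sInf_mem (Nat.nonempty_of_sInf_eq_succ h)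
    exact ⟨f, hf, hf1.trans h⟩
  · rintro ⟨f, hf, hf1⟩
    refine le_antisymm (Nat.sInf_le ⟨f, hf, hf1⟩) (le_csInf ⟨1, f, hf, hf1⟩ ?_)
    rintro _ ⟨g, hg, rfl⟩
    exact one_le_negCount hG hn hg

end Labelling

/-- A connected graph `G` on `n ≥ 2` vertices has rna number `1` iff
`G` has a bridge `uv` such that the two connected components of `G - uv` (the component
of `u` and the component of `v` after deleting the edge `uv`) have orders differing by
at most `1`. -/
theorem rna_eq_one_iff_bridge {V : Type*} [Fintype V] (G : SimpleGraph V)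
    (hG : G.Connected) (hn : 2 ≤ Fintype.card V) :
    rnaNumber G = 1 ↔
      ∃ u v : V, G.Adj u v ∧ G.IsBridge s(u, v) ∧
        |((((G.deleteEdges {s(u, v)}).connectedComponentMk u).supp.ncard : ℤ)) -
          (((G.deleteEdges {s(u, v)}).connectedComponentMk v).supp.ncard : ℤ)| ≤ 1 := by
  rw [rnaNumber_eq_one_iff hG hn]
  constructor
  · rintro ⟨f, hf, hneg⟩
    obtain ⟨u, v, huv, hfuv, honly⟩ := negCount_eq_one_iff.mp hneg
    have hsupp := hG.supp_connectedComponentMk_deleteEdges_eq (S := {w | f w % 2 = f u % 2})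
      rfl hfuv.symm fun x y hxy hS => honly x y hxy (by simp only [mem_ofPred_eq] at hS; omega)
    have hv : v ∉ ((G.deleteEdges {s(u, v)}).connectedComponentMk u).supp :=
      hsupp ▸ fun h => hfuv h.symm
    have hbr : ¬(G.deleteEdges {s(u, v)}).Reachable u v :=
      fun h => hv (ConnectedComponent.eq.mpr h.symm)
    refine ⟨u, v, huv, isBridge_iff.mpr hbr, ?_⟩
    rw [hG.supp_connectedComponentMk_deleteEdges_eq_compl hbr, hsupp]
    exact abs_ncard_setOf_mod_two_sub_le_one hf u
  · rintro ⟨u, v, huv, hbr, hbal⟩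
    rw [isBridge_iff] at hbr
    rw [hG.supp_connectedComponentMk_deleteEdges_eq_compl hbr] at hbal
    obtain ⟨f, hf, hpar⟩ := exists_bijOn_mod_two_eq_iff hbal
    refine ⟨f, hf, negCount_eq_one_iff.mpr ⟨u, v, huv, ?_, fun x y hxy hfxy => ?_⟩⟩
    · exact fun h => hbr (ConnectedComponent.eq.mp (((hpar u v).mp h).mp rfl)).symm
    · by_contra hne
      exact (hpar x y).not.mp hfxy (ConnectedComponent.mem_supp_deleteEdges_iff _ hxy hne)
end
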